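/- arXiv:1704.02464 — 2 statements merged into one kernel-verified Lean document; each statement's English description precedes it below -/
import Mathlib

section
/- Let a < b, α ∈ (0,1), γ ∈ (0,1], k > γ - α - 1, and M ≥ 0. Suppose g : (a,b] → ℝ is measurable with |g(s)| ≤ M (s-a)^k for all s ∈ (a,b]. Then lim_{t→a⁺} (t-a)^{1-γ} ∫_a^t (t-s)^{α-1} g(s) ds / Γ(α) = 0. -/
/-!
Split the Riemann–Liouville integral at the midpoint `m = (a + t) / 2`. On `(a, m]` the kernel
`(t - s) ^ (α - 1)` is at most `((t - a) / 2) ^ (α - 1)`, so that piece is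
`O((t - a) ^ (α - 1) * J t)` with `J t = ∫ s in Ioc a m, |g s|`; on `(m, t]` we have
`|g| = O((t - a) ^ k)` and the kernel integrates to `((t - a) / 2) ^ α / α`. After
multiplication by `(t - a) ^ (1 - γ)` the second piece is `O((t - a) ^ (α + k + 1 - γ))`. For
the first, either `k > -1` and `J t = O((t - a) ^ (k + 1))`, or `k ≤ -1`, whence `γ < α`, `J`
stays bounded and the factor `(t - a) ^ (α - γ)` does the work.

Divergent integrals take the value `0`, and every bound survives this: if `g` is not integrable
near `a` then, being bounded away from `a`, it is not integrable on any `(a, m]` either.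
-/

open MeasureTheory Set Filter Topology intervalIntegral

theorem Real.rpow_le_rpow_add_rpow_of_mem_Icc {x y z : ℝ} (k : ℝ) (hx : 0 < x)
    (hy : y ∈ Icc x z) : y ^ k ≤ x ^ k + z ^ k := by
  have hy0 : 0 < y := hx.trans_le hy.1
  rcases le_total 0 k with hk | hk
  · have := Real.rpow_le_rpow hy0.le hy.2 hk
    have := Real.rpow_nonneg hx.le k
    linarith
  · have := Real.rpow_le_rpow_of_nonpos hx hy.1 hk
    have := Real.rpow_nonneg (hy0.le.trans hy.2) k
    linarith

theorem integral_sub_rpow_sub_one {α : ℝ} (m t : ℝ) (hα : 0 < α) :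
    ∫ s in m..t, (t - s) ^ (α - 1) = (t - m) ^ α / α := by
  rw [integral_comp_sub_left (fun x => x ^ (α - 1)) t, sub_self,
    integral_rpow (Or.inl (by linarith)), sub_add_cancel, Real.zero_rpow hα.ne', sub_zero]

theorem tendsto_sub_rpow_nhdsGT {a p : ℝ} (hp : 0 < p) :
    Tendsto (fun t => (t - a) ^ p) (𝓝[>] a) (𝓝 0) := by
  have hcont : Continuous fun t : ℝ => (t - a) ^ p :=
    (continuous_id.sub continuous_const).rpow_const fun _ => Or.inr hp.le
  exact (hcont.tendsto' a 0 (by simp [Real.zero_rpow hp.ne'])).mono_left nhdsWithin_le_nhds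

theorem MeasureTheory.IntegrableOn.of_rpow_sub_mul {g : ℝ → ℝ} {a c t r : ℝ} (hct : c < t)
    (h : IntegrableOn (fun s => (t - s) ^ r * g s) (Ioc a c)) : IntegrableOn g (Ioc a c) := by
  rw [← integrableOn_Icc_iff_integrableOn_Ioc] at h ⊢
  have hpos : ∀ s ∈ Icc a c, 0 < t - s := fun s hs => by linarith [hs.2]
  have hcont : ContinuousOn (fun s => (t - s) ^ (-r)) (Icc a c) := fun s hs =>
    ((continuous_const.sub continuous_id).continuousAt.rpow_const
      (Or.inl (hpos s hs).ne')).continuousWithinAt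
  refine (h.continuousOn_mul hcont isCompact_Icc).congr_fun (fun s hs => ?_) measurableSet_Icc
  dsimp only
  rw [← mul_assoc, ← Real.rpow_add (hpos s hs), neg_add_cancel, Real.rpow_zero, one_mul]

section KernelSplit

variable {g : ℝ → ℝ} {a m t α : ℝ}

theorem abs_integral_rpow_sub_mul_le_setIntegral_abs (hα : α ≤ 1) (ham : a ≤ m) (hmt : m < t)
    (hg : IntegrableOn g (Ioc a m)) :
    |∫ s in a..m, (t - s) ^ (α - 1) * g s| ≤ (t - m) ^ (α - 1) * ∫ s in Ioc a m, |g s| := by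
  rw [← integral_of_le ham, ← intervalIntegral.integral_const_mul]
  refine (Real.norm_eq_abs _).symm.trans_le <| norm_integral_le_of_norm_le ham
    (ae_of_all _ fun s hs => ?_)
    (((intervalIntegrable_iff_integrableOn_Ioc_of_le ham).2 hg).abs.const_mul _)
  have hts : t - m ≤ t - s := by linarith [hs.2]
  have htm : 0 < t - m := by linarith
  rw [Real.norm_eq_abs, abs_mul, abs_of_nonneg (Real.rpow_nonneg (htm.le.trans hts) _)]
  exact mul_le_mul_of_nonneg_right (Real.rpow_le_rpow_of_nonpos htm hts (by linarith))
    (abs_nonneg _)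

theorem abs_integral_rpow_sub_mul_le_of_abs_le {L : ℝ} (hα : 0 < α) (hmt : m ≤ t)
    (hL : ∀ s ∈ Ioc m t, |g s| ≤ L) :
    |∫ s in m..t, (t - s) ^ (α - 1) * g s| ≤ L * (t - m) ^ α / α := by
  have hint : IntervalIntegrable (fun s => (t - s) ^ (α - 1)) volume m t := by
    simpa using (intervalIntegral.intervalIntegrable_rpow' (a := t - m) (b := 0)
      (by linarith)).comp_sub_left t
  calc |∫ s in m..t, (t - s) ^ (α - 1) * g s| ≤ ∫ s in m..t, L * (t - s) ^ (α - 1) := by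
        refine (Real.norm_eq_abs _).symm.trans_le <| norm_integral_le_of_norm_le hmt
          (ae_of_all _ fun s hs => ?_) (hint.const_mul L)
        rw [Real.norm_eq_abs, abs_mul, abs_of_nonneg (Real.rpow_nonneg (by linarith [hs.2]) _),
          mul_comm L]
        exact mul_le_mul_of_nonneg_left (hL s hs) (Real.rpow_nonneg (by linarith [hs.2]) _)
    _ = L * (t - m) ^ α / α := by
        rw [intervalIntegral.integral_const_mul, integral_sub_rpow_sub_one m t hα, mul_div_assoc]

theorem abs_integral_rpow_sub_mul_le {L : ℝ} (hα0 : 0 < α) (hα1 : α ≤ 1) (ham : a ≤ m)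
    (hmt : m < t) (hL : ∀ s ∈ Ioc m t, |g s| ≤ L) :
    |∫ s in a..t, (t - s) ^ (α - 1) * g s|
      ≤ (t - m) ^ (α - 1) * (∫ s in Ioc a m, |g s|) + L * (t - m) ^ α / α := by
  by_cases hF : IntervalIntegrable (fun s => (t - s) ^ (α - 1) * g s) volume a t
  swap
  · have hL0 : 0 ≤ L := (abs_nonneg _).trans (hL t ⟨hmt, le_rfl⟩)
    have hJ0 : 0 ≤ ∫ s in Ioc a m, |g s| :=
      setIntegral_nonneg measurableSet_Ioc fun _ _ => abs_nonneg _
    rw [integral_undef hF, abs_zero]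
    positivity
  have hFt := (intervalIntegrable_iff_integrableOn_Ioc_of_le (ham.trans hmt.le)).1 hF
  have hFm := hFt.mono_set (Ioc_subset_Ioc_right hmt.le)
  rw [← integral_add_adjacent_intervals
    ((intervalIntegrable_iff_integrableOn_Ioc_of_le ham).2 hFm)
    ((intervalIntegrable_iff_integrableOn_Ioc_of_le hmt.le).2
      (hFt.mono_set (Ioc_subset_Ioc_left ham)))]
  exact (abs_add_le _ _).trans <| add_le_add
    (abs_integral_rpow_sub_mul_le_setIntegral_abs hα1 ham hmt (hFm.of_rpow_sub_mul hmt))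
    (abs_integral_rpow_sub_mul_le_of_abs_le hα0 hmt.le hL)

end KernelSplit

section PowerBound

variable {g : ℝ → ℝ} {a b c k M : ℝ}

theorem integrableOn_Ioc_of_abs_le_rpow (hg : AEStronglyMeasurable g) (hM : 0 ≤ M)
    (hbound : ∀ s ∈ Ioc a b, |g s| ≤ M * (s - a) ^ k) (hac : a < c) :
    IntegrableOn g (Ioc c b) := by
  refine Measure.integrableOn_of_bounded (M := M * ((c - a) ^ k + (b - a) ^ k))
    measure_Ioc_lt_top.ne hg (ae_restrict_of_forall_mem measurableSet_Ioc fun s hs => ?_)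
  rw [Real.norm_eq_abs]
  refine (hbound s ⟨hac.trans hs.1, hs.2⟩).trans (mul_le_mul_of_nonneg_left ?_ hM)
  exact Real.rpow_le_rpow_add_rpow_of_mem_Icc k (by linarith)
    ⟨by linarith [hs.1], by linarith [hs.2]⟩

theorem setIntegral_abs_Ioc_mono_of_abs_le_rpow (hg : AEStronglyMeasurable g) (hM : 0 ≤ M)
    (hbound : ∀ s ∈ Ioc a b, |g s| ≤ M * (s - a) ^ k) (hac : a < c) (hcb : c ≤ b) :
    ∫ s in Ioc a c, |g s| ≤ ∫ s in Ioc a b, |g s| := by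
  by_cases hint : IntegrableOn g (Ioc a b)
  · exact setIntegral_mono_set hint.abs (ae_of_all _ fun _ => abs_nonneg _)
      (Ioc_subset_Ioc_right hcb).eventuallyLE
  have hnot : ¬ IntegrableOn (fun s => |g s|) (Ioc a c) := fun h => hint <| by
    have hgc : IntegrableOn g (Ioc a c) := (integrable_norm_iff hg.restrict).1 h
    rw [← Ioc_union_Ioc_eq_Ioc hac.le hcb]
    exact hgc.union (integrableOn_Ioc_of_abs_le_rpow hg hM hbound hac)
  rw [integral_undef hnot]
  exact setIntegral_nonneg measurableSet_Ioc fun _ _ => abs_nonneg _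

theorem setIntegral_abs_Ioc_le_of_abs_le_rpow (hk : -1 < k) (hac : a ≤ c)
    (hbound : ∀ s ∈ Ioc a c, |g s| ≤ M * (s - a) ^ k) :
    ∫ s in Ioc a c, |g s| ≤ M * (c - a) ^ (k + 1) / (k + 1) := by
  have hint : IntervalIntegrable (fun s => M * (s - a) ^ k) volume a c := by
    simpa using ((intervalIntegral.intervalIntegrable_rpow' hk (a := 0) (b := c - a)
      ).comp_sub_right a).const_mul M
  calc ∫ s in Ioc a c, |g s| ≤ ∫ s in Ioc a c, M * (s - a) ^ k :=
        integral_mono_of_nonneg (ae_of_all _ fun _ => abs_nonneg _) hint.1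
          (ae_restrict_of_forall_mem measurableSet_Ioc hbound)
    _ = M * (c - a) ^ (k + 1) / (k + 1) := by
        rw [← integral_of_le hac, intervalIntegral.integral_const_mul,
          integral_comp_sub_right (fun x => x ^ k) a, sub_self, integral_rpow (Or.inl hk),
          Real.zero_rpow (by linarith), sub_zero, mul_div_assoc]

theorem tendsto_sub_rpow_mul_setIntegral_abs_Ioc_half {p : ℝ} (hab : a < b)
    (hg : AEStronglyMeasurable g) (hM : 0 ≤ M)
    (hbound : ∀ s ∈ Ioc a b, |g s| ≤ M * (s - a) ^ k) (hk : -1 - p < k) :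
    Tendsto (fun t => (t - a) ^ p * ∫ s in Ioc a ((a + t) / 2), |g s|) (𝓝[>] a) (𝓝 0) := by
  have hnear : ∀ᶠ t in 𝓝[>] a, t ∈ Ioc a b := Ioc_mem_nhdsGT hab
  have hnonneg :
      ∀ᶠ t in 𝓝[>] a, 0 ≤ (t - a) ^ p * ∫ s in Ioc a ((a + t) / 2), |g s| := by
    filter_upwards [hnear] with t ht
    exact mul_nonneg (Real.rpow_nonneg (by linarith [ht.1]) _)
      (setIntegral_nonneg measurableSet_Ioc fun _ _ => abs_nonneg _)
  rcases lt_or_ge (-1) k with hk1 | hk1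
  · have hlim := (tendsto_sub_rpow_nhdsGT (a := a) (p := p + (k + 1)) (by linarith)).const_mul
      (M / (k + 1))
    rw [mul_zero] at hlim
    refine squeeze_zero' hnonneg ?_ hlim
    filter_upwards [hnear] with t ⟨hat, htb⟩
    have hu : 0 < t - a := by linarith
    calc (t - a) ^ p * ∫ s in Ioc a ((a + t) / 2), |g s|
        ≤ (t - a) ^ p * (M * ((a + t) / 2 - a) ^ (k + 1) / (k + 1)) := by
          refine mul_le_mul_of_nonneg_left ?_ (Real.rpow_nonneg hu.le _)
          exact setIntegral_abs_Ioc_le_of_abs_le_rpow hk1 (by linarith)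
            fun s hs => hbound s ⟨hs.1, by linarith [hs.2]⟩
      _ ≤ (t - a) ^ p * (M * (t - a) ^ (k + 1) / (k + 1)) := by
          refine mul_le_mul_of_nonneg_left ?_ (Real.rpow_nonneg hu.le _)
          refine div_le_div_of_nonneg_right (mul_le_mul_of_nonneg_left ?_ hM) (by linarith)
          exact Real.rpow_le_rpow (by linarith) (by linarith) (by linarith)
      _ = M / (k + 1) * (t - a) ^ (p + (k + 1)) := by
          rw [Real.rpow_add hu p]
          ring
  · have hlim := (tendsto_sub_rpow_nhdsGT (a := a) (p := p) (by linarith)).mul_const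
      (∫ s in Ioc a b, |g s|)
    rw [zero_mul] at hlim
    refine squeeze_zero' hnonneg ?_ hlim
    filter_upwards [hnear] with t ⟨hat, htb⟩
    refine mul_le_mul_of_nonneg_left ?_ (Real.rpow_nonneg (by linarith) _)
    exact setIntegral_abs_Ioc_mono_of_abs_le_rpow hg hM hbound (by linarith) (by linarith)

end PowerBound

theorem abs_rpow_mul_fracInt_le {g : ℝ → ℝ} {a t α γ k M : ℝ} (hα0 : 0 < α)
    (hα1 : α ≤ 1) (hM : 0 ≤ M) (hat : a < t)
    (hbound : ∀ s ∈ Ioc a t, |g s| ≤ M * (s - a) ^ k) :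
    |(t - a) ^ (1 - γ) * ((∫ s in a..t, (t - s) ^ (α - 1) * g s) / Real.Gamma α)|
      ≤ (2 ^ (α - 1))⁻¹ / Real.Gamma α
          * ((t - a) ^ (α - γ) * ∫ s in Ioc a ((a + t) / 2), |g s|)
        + M * ((2 ^ k)⁻¹ + 1) / (2 ^ α * α * Real.Gamma α)
          * (t - a) ^ (α + k + 1 - γ) := by
  have hΓ : 0 < Real.Gamma α := Real.Gamma_pos_of_pos hα0
  have hu : 0 < t - a := by linarith
  have hsplit := abs_integral_rpow_sub_mul_le (a := a) (m := (a + t) / 2) (t := t)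
    (L := M * (((t - a) / 2) ^ k + (t - a) ^ k)) hα0 hα1 (by linarith) (by linarith)
    fun s hs => (hbound s ⟨by linarith [hs.1], hs.2⟩).trans <|
      mul_le_mul_of_nonneg_left (Real.rpow_le_rpow_add_rpow_of_mem_Icc k (by linarith)
        ⟨by linarith [hs.1], by linarith [hs.2]⟩) hM
  rw [show t - (a + t) / 2 = (t - a) / 2 by ring] at hsplit
  have e1 : (t - a) ^ (α - γ) = (t - a) ^ (1 - γ) * (t - a) ^ (α - 1) := by
    rw [← Real.rpow_add hu]; congr 1; ring
  have e2 : (t - a) ^ (α + k + 1 - γ) = (t - a) ^ (1 - γ) * (t - a) ^ k * (t - a) ^ α := by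
    rw [← Real.rpow_add hu, ← Real.rpow_add hu]; congr 1; ring
  rw [abs_mul, abs_div, abs_of_pos hΓ, abs_of_nonneg (Real.rpow_nonneg hu.le _), e1, e2]
  refine (mul_le_mul_of_nonneg_left (div_le_div_of_nonneg_right hsplit hΓ.le)
    (Real.rpow_nonneg hu.le _)).trans_eq ?_
  simp only [Real.div_rpow hu.le zero_le_two]
  field_simp

theorem weighted_fracInt_tendsto_zero_general (a b α γ k M : ℝ) (hab : a < b)
    (hα : α ∈ Set.Ioo (0:ℝ) 1)
    (hk : γ - α - 1 < k) (hM : 0 ≤ M)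
    (g : ℝ → ℝ) (hg : Measurable g)
    (hbound : ∀ s ∈ Set.Ioc a b, |g s| ≤ M * (s - a) ^ k) :
    Filter.Tendsto
      (fun t => (t - a) ^ (1 - γ) * ((∫ s in a..t, (t - s) ^ (α - 1) * g s) / Real.Gamma α))
      (nhdsWithin a (Set.Ioi a)) (nhds 0) := by
  have hhead := tendsto_sub_rpow_mul_setIntegral_abs_Ioc_half (p := α - γ) hab
    hg.aestronglyMeasurable hM hbound (by linarith)
  have htail := tendsto_sub_rpow_nhdsGT (a := a) (p := α + k + 1 - γ) (by linarith [hα.1])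
  have hlim := (hhead.const_mul ((2 ^ (α - 1))⁻¹ / Real.Gamma α)).add
    (htail.const_mul (M * ((2 ^ k)⁻¹ + 1) / (2 ^ α * α * Real.Gamma α)))
  rw [mul_zero, mul_zero, add_zero] at hlim
  refine squeeze_zero_norm' ?_ hlim
  filter_upwards [Ioc_mem_nhdsGT hab] with t ⟨hat, htb⟩
  exact abs_rpow_mul_fracInt_le hα.1 hα.2.le hM hat
    fun s hs => hbound s (Ioc_subset_Ioc_right htb hs)

theorem weighted_fracInt_tendsto_zero (a b α γ k M : ℝ) (hab : a < b)
    (hα : α ∈ Set.Ioo (0:ℝ) 1) (hγ : γ ∈ Set.Ioc (0:ℝ) 1)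
    (hk : γ - α - 1 < k) (hM : 0 ≤ M)
    (g : ℝ → ℝ) (hg : Measurable g)
    (hbound : ∀ s ∈ Set.Ioc a b, |g s| ≤ M * (s - a) ^ k) :
    Filter.Tendsto
      (fun t => (t - a) ^ (1 - γ) * ((∫ s in a..t, (t - s) ^ (α - 1) * g s) / Real.Gamma α))
      (nhdsWithin a (Set.Ioi a)) (nhds 0) :=
  weighted_fracInt_tendsto_zero_general a b α γ k M hab hα hk hM g hg hbound
end

section
/- Let a ∈ ℝ, l > 0, α ∈ (0,1), γ ∈ (0,1], k > γ - α - 1 with α + k + 1 - γ > 0, and A, M > 0. Suppose (φ_n) is a sequence of functions on (a, a+l] satisfying (t-a)^{1-γ}|φ_{n+1}(t) - φ_n(t)| ≤ A^n M l^{(n+1)(α+k+1-γ)} ∏_{i=0}^{n} B(α,(i+1)k+i(α+1-γ)+1)/Γ(α) for all n and t. Then the sequence of functions t ↦ (t-a)^{1-γ} φ_n(t) converges uniformly on (a, a+l]. -/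
/-!
The weighted iterates telescope, so by the Weierstrass M-test it suffices that the majorants
`bₙ` are summable. Consecutive majorants differ by the factor `A l^c B(α, yₙ₊₁) / Γ(α)` with
`c = α + k + 1 - γ > 0` and `yₙ = n c + k + 1 → ∞`, and by log-convexity of `Γ`,
`B(α, y) = Γ(α) Γ(y) / Γ(y + α) ≤ Γ(α) (y + α - 1)^(-α) → 0`; hence the ratio test applies.
-/

noncomputable def eulerBeta (x y : ℝ) : ℝ :=
  ∫ u in (0:ℝ)..1, (1 - u) ^ (x - 1) * u ^ (y - 1)

open Filter Topology

theorem ofReal_eulerBeta (x y : ℝ) : (eulerBeta x y : ℂ) = Complex.betaIntegral y x := by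
  rw [eulerBeta, Complex.betaIntegral, ← intervalIntegral.integral_ofReal]
  refine intervalIntegral.integral_congr fun u hu => ?_
  rw [Set.uIcc_of_le zero_le_one] at hu
  push_cast
  rw [Complex.ofReal_cpow (sub_nonneg.2 hu.2), Complex.ofReal_cpow hu.1]
  push_cast
  ring

theorem eulerBeta_eq_Gamma_mul_Gamma_div {x y : ℝ} (hx : 0 < x) (hy : 0 < y) :
    eulerBeta x y = Real.Gamma x * Real.Gamma y / Real.Gamma (x + y) := by
  have h := Complex.betaIntegral_eq_Gamma_mul_div y x (by simpa) (by simpa)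
  rw [← ofReal_eulerBeta, ← Complex.ofReal_add, Complex.Gamma_ofReal, Complex.Gamma_ofReal,
    Complex.Gamma_ofReal] at h
  rw [mul_comm, add_comm]
  exact_mod_cast h

-- Gautschi-type bound: log-convexity of `Γ` between `y + α - 1` and `y + α`.
theorem Gamma_le_Gamma_add_mul_rpow {y α : ℝ} (hα₀ : 0 < α) (hα₁ : α < 1) (hy : 1 < y + α) :
    Real.Gamma y ≤ Real.Gamma (y + α) * (y + α - 1) ^ (-α) := by
  have hs : 0 < y + α - 1 := by linarith
  have hrec : Real.Gamma (y + α) = (y + α - 1) * Real.Gamma (y + α - 1) := by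
    simpa using Real.Gamma_add_one hs.ne'
  have hconv := Real.Gamma_mul_add_mul_le_rpow_Gamma_mul_rpow_Gamma hs (by linarith : 0 < y + α)
    hα₀ (sub_pos.2 hα₁) (add_sub_cancel α 1)
  have hG := Real.Gamma_pos_of_pos hs
  calc Real.Gamma y = Real.Gamma (α * (y + α - 1) + (1 - α) * (y + α)) := by ring_nf
    _ ≤ Real.Gamma (y + α - 1) ^ α * Real.Gamma (y + α) ^ (1 - α) := hconv
    _ = Real.Gamma (y + α) * (y + α - 1) ^ (-α) := by
      rw [hrec, Real.mul_rpow hs.le hG.le, Real.rpow_sub hG, Real.rpow_sub hs, Real.rpow_one,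
        Real.rpow_one, Real.rpow_neg hs.le]
      field_simp

theorem tendsto_eulerBeta_atTop {α : ℝ} (hα₀ : 0 < α) (hα₁ : α < 1) :
    Tendsto (eulerBeta α) atTop (𝓝 0) := by
  have hΓ := Real.Gamma_pos_of_pos hα₀
  have hupper : Tendsto (fun y => Real.Gamma α * (y + α - 1) ^ (-α)) atTop (𝓝 0) := by
    simpa only [add_sub_assoc, mul_zero, Function.comp_def, id] using
      ((tendsto_rpow_neg_atTop hα₀).comp
        (tendsto_atTop_add_const_right _ (α - 1) tendsto_id)).const_mul (Real.Gamma α)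
  refine tendsto_of_tendsto_of_tendsto_of_le_of_le' tendsto_const_nhds hupper ?_ ?_
  all_goals filter_upwards [eventually_gt_atTop 1] with y hy
  all_goals rw [eulerBeta_eq_Gamma_mul_Gamma_div hα₀ (by linarith)]
  · have hΓy := Real.Gamma_pos_of_pos (by linarith : 0 < y)
    have hΓαy := Real.Gamma_pos_of_pos (by linarith : 0 < α + y)
    positivity
  · rw [mul_div_assoc, add_comm]
    gcongr
    rw [div_le_iff₀ (Real.Gamma_pos_of_pos (by linarith))]
    linarith [Gamma_le_Gamma_add_mul_rpow hα₀ hα₁ (y := y) (by linarith)]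

theorem summable_of_norm_succ_le_of_tendsto_zero {E : Type*} [SeminormedAddCommGroup E]
    [CompleteSpace E] {f : ℕ → E} {g : ℕ → ℝ} (hg : Tendsto g atTop (𝓝 0))
    (hf : ∀ n, ‖f (n + 1)‖ ≤ g n * ‖f n‖) : Summable f := by
  refine summable_of_ratio_norm_eventually_le one_half_lt_one ?_
  filter_upwards [hg.eventually (eventually_le_nhds one_half_pos)] with n hn
  exact (hf n).trans (by gcongr)

theorem summable_pow_mul_rpow_mul_prod {r M l c : ℝ} (hl : 0 < l) {u : ℕ → ℝ}
    (hu : Tendsto u atTop (𝓝 0)) :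
    Summable fun n : ℕ => r ^ n * M * l ^ ((n + 1 : ℝ) * c) * ∏ i ∈ Finset.range (n + 1), u i := by
  have hratio : Tendsto (fun n => ‖r * l ^ c * u (n + 1)‖) atTop (𝓝 0) := by
    simpa using ((hu.comp (tendsto_add_atTop_nat 1)).const_mul (r * l ^ c)).norm
  refine summable_of_norm_succ_le_of_tendsto_zero hratio fun n => le_of_eq ?_
  rw [← norm_mul, Finset.prod_range_succ _ (n + 1), pow_succ, Nat.cast_succ,
    add_one_mul (n + 1 : ℝ), Real.rpow_add hl]
  ring_nf

theorem exists_tendstoUniformlyOn_of_norm_sub_le {β E : Type*} [NormedAddCommGroup E]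
    [CompleteSpace E] {F : ℕ → β → E} {s : Set β} {b : ℕ → ℝ} (hb : Summable b)
    (h : ∀ n, ∀ x ∈ s, ‖F (n + 1) x - F n x‖ ≤ b n) : ∃ ψ, TendstoUniformlyOn F ψ atTop s := by
  have hconst : TendstoUniformlyOn (fun _ : ℕ => F 0) (F 0) atTop s :=
    fun _ hu => Eventually.of_forall fun _ _ _ => refl_mem_uniformity hu
  refine ⟨_, (hconst.add (tendstoUniformlyOn_tsum_nat hb h)).congr
    (Eventually.of_forall fun N x _ => ?_)⟩
  simp only [Pi.add_apply]
  rw [Finset.sum_range_sub (F · x), add_sub_cancel]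

theorem picard_weighted_uniform_convergence_general (a l α γ k A M : ℝ) (hl : 0 < l)
    (hα : α ∈ Set.Ioo (0:ℝ) 1) (hpos : 0 < α + k + 1 - γ)
    (φ : ℕ → ℝ → ℝ)
    (hdiff : ∀ n : ℕ, ∀ t ∈ Set.Ioc a (a + l),
      (t - a) ^ (1 - γ) * |φ (n + 1) t - φ n t|
        ≤ A ^ n * M * l ^ ((n + 1 : ℝ) * (α + k + 1 - γ)) *
          ∏ i ∈ Finset.range (n + 1),
            eulerBeta α ((i + 1 : ℝ) * k + (i : ℝ) * (α + 1 - γ) + 1) / Real.Gamma α) :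
    ∃ ψ : ℝ → ℝ, TendstoUniformlyOn
      (fun n t => (t - a) ^ (1 - γ) * φ n t) ψ Filter.atTop (Set.Ioc a (a + l)) := by
  have hparam : Tendsto (fun i : ℕ => (i + 1 : ℝ) * k + (i : ℝ) * (α + 1 - γ) + 1) atTop atTop := by
    refine tendsto_atTop_add_const_right _ (k + 1)
      (tendsto_natCast_atTop_atTop.atTop_mul_const hpos) |>.congr fun i => ?_
    ring
  have hbeta := ((tendsto_eulerBeta_atTop hα.1 hα.2).comp hparam).div_const (Real.Gamma α)
  rw [zero_div] at hbeta
  have hsummable := summable_pow_mul_rpow_mul_prod (r := A) (M := M) (c := α + k + 1 - γ) hl hbeta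
  refine exists_tendstoUniformlyOn_of_norm_sub_le hsummable fun n t ht => ?_
  rw [← mul_sub, norm_mul, Real.norm_eq_abs, Real.norm_eq_abs,
    abs_of_nonneg (Real.rpow_nonneg (sub_nonneg.2 ht.1.le) _)]
  exact hdiff n t ht

theorem picard_weighted_uniform_convergence (a l α γ k A M : ℝ) (hl : 0 < l)
    (hα : α ∈ Set.Ioo (0:ℝ) 1) (hγ : γ ∈ Set.Ioc (0:ℝ) 1)
    (hk : γ - α - 1 < k) (hpos : 0 < α + k + 1 - γ) (hA : 0 < A) (hM : 0 < M)
    (φ : ℕ → ℝ → ℝ)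
    (hdiff : ∀ n : ℕ, ∀ t ∈ Set.Ioc a (a + l),
      (t - a) ^ (1 - γ) * |φ (n + 1) t - φ n t|
        ≤ A ^ n * M * l ^ ((n + 1 : ℝ) * (α + k + 1 - γ)) *
          ∏ i ∈ Finset.range (n + 1),
            eulerBeta α ((i + 1 : ℝ) * k + (i : ℝ) * (α + 1 - γ) + 1) / Real.Gamma α) :
    ∃ ψ : ℝ → ℝ, TendstoUniformlyOn
      (fun n t => (t - a) ^ (1 - γ) * φ n t) ψ Filter.atTop (Set.Ioc a (a + l)) :=
  picard_weighted_uniform_convergence_general a l α γ k A M hl hα hpos φ hdiff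
end
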